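/- Let 𝔮 be the 2N×2N matrix with entries 𝔮_{ij} = 1/((i+j)(i+j−1)) (1 ≤ i, j ≤ 2N). Then 𝔮 is invertible and every entry of 𝔔 = 𝔮⁻¹ is an even integer. -/

import Mathlib

open Matrix

/-- The matrix `𝔮` with entries `𝔮_{ij} = 1/((i+j)(i+j-1))` (1-based indices). -/
noncomputable def qmat (n : ℕ) : Matrix (Fin n) (Fin n) ℝ :=
  Matrix.of fun i j => ((((i.val + 1) + (j.val + 1)) * (((i.val + 1) + (j.val + 1)) - 1) : ℕ) : ℝ)⁻¹

/-!
`𝔮` is the Gram matrix of the monomials `1, x, x², …` for the weight `1 - x` on `[0, 1]`.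
Orthogonalising them gives the shifted Jacobi polynomials `∑ⱼ c m j xʲ` with integer coefficients
`c m j = (-1)^(m-j) C(m,j) C(m+j+1,m+1)`; the lower triangular matrix `J = (c m j)` therefore
satisfies `J 𝔮 Jᵀ = diag (1/(2m+2))`, so `𝔮⁻¹ = Jᵀ diag (2m+2) J` has even integer entries.

The orthogonality relations are alternating sums `∑ⱼ (-1)^(m-j) C(m,j) P(j)/(j+c)` with
`deg P ≤ m`. Writing `P(j)/(j+c) = P(-c)/(j+c) + R(j)` with `deg R < m`, the `m`-th forward
difference kills `R`, and `Δ^m (1/(x+c)) = (-1)^m m! / ∏_{a ≤ m} (x+c+a)`.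
-/

open Finset Polynomial Nat fwdDiff

section AlternatingSums

variable {K : Type*}

theorem sum_range_alternating_choose_mul_eq_fwdDiff_iter [CommRing K] {M : Type*}
    [AddCommMonoid M] (f : M → K) (h : M) (m : ℕ) :
    ∑ j ∈ range (m + 1), (-1) ^ (m - j) * m.choose j * f (j • h) = (Δ_[h])^[m] f 0 := by
  rw [fwdDiff_iter_eq_sum_shift]
  refine sum_congr rfl fun j _ => ?_
  rw [zsmul_eq_mul, zero_add]
  push_cast
  rfl

theorem sum_range_alternating_choose_mul_eval_eq_zero [CommRing K] {m : ℕ} {R : K[X]}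
    (hR : R.degree < m) :
    ∑ j ∈ range (m + 1), (-1) ^ (m - j) * m.choose j * R.eval (j : K) = 0 := by
  rcases eq_or_ne R 0 with rfl | hR0
  · simp
  have := sum_range_alternating_choose_mul_eq_fwdDiff_iter R.eval 1 m
  simp only [nsmul_one] at this
  rw [this, fwdDiff_iter_eq_zero_of_degree_lt ((natDegree_lt_iff_degree_lt hR0).mpr hR)]
  rfl

theorem fwdDiff_iter_inv_natCast_add [Field K] {c : K} (hc : ∀ k : ℕ, c + k ≠ 0) (m : ℕ) :
    (Δ_[1])^[m] (fun x : ℕ => ((x : K) + c)⁻¹) =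
      fun x : ℕ => (-1) ^ m * m ! / ∏ a ∈ range (m + 1), ((x : K) + c + a) := by
  have hne : ∀ x a : ℕ, (x : K) + c + a ≠ 0 := fun x a => by
    simpa [add_comm, add_left_comm, add_assoc] using hc (x + a)
  induction m with
  | zero => funext x; simp
  | succ m ih =>
    funext x
    rw [Function.iterate_succ_apply', ih, fwdDiff]
    have hsucc : ∏ a ∈ range (m + 2), ((x : K) + c + a) =
        ((x : K) + c) * ∏ a ∈ range (m + 1), (((x + 1 : ℕ) : K) + c + a) := by
      rw [prod_range_succ']
      push_cast
      ring_nf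
    have hsucc' : ∏ a ∈ range (m + 2), ((x : K) + c + a) =
        (∏ a ∈ range (m + 1), ((x : K) + c + a)) * ((x : K) + c + (m + 1 : ℕ)) :=
      prod_range_succ _ _
    have hP : ∏ a ∈ range (m + 1), ((x : K) + c + a) ≠ 0 :=
      prod_ne_zero_iff.mpr fun a _ => hne x a
    have hQ : ∏ a ∈ range (m + 1), (((x + 1 : ℕ) : K) + c + a) ≠ 0 :=
      prod_ne_zero_iff.mpr fun a _ => hne (x + 1) a
    have hT : ∏ a ∈ range (m + 2), ((x : K) + c + a) ≠ 0 :=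
      prod_ne_zero_iff.mpr fun a _ => hne x a
    rw [div_sub_div _ _ hQ hP, div_eq_div_iff (mul_ne_zero hQ hP) hT]
    push_cast [Nat.factorial_succ] at hsucc hsucc' ⊢
    linear_combination ((-1) ^ m * m ! * ∏ a ∈ range (m + 1), ((x : K) + c + a)) * hsucc -
      ((-1) ^ m * m ! * ∏ a ∈ range (m + 1), ((x : K) + 1 + c + a)) * hsucc'

theorem sum_range_alternating_choose_div_add [Field K] {c : K} (hc : ∀ k : ℕ, c + k ≠ 0)
    (m : ℕ) :
    ∑ j ∈ range (m + 1), (-1) ^ (m - j) * m.choose j / ((j : K) + c) =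
      (-1) ^ m * m ! / ∏ a ∈ range (m + 1), (c + a) := by
  have := sum_range_alternating_choose_mul_eq_fwdDiff_iter (fun x : ℕ => ((x : K) + c)⁻¹) 1 m
  rw [fwdDiff_iter_inv_natCast_add hc] at this
  simpa [div_eq_mul_inv] using this

theorem sum_range_alternating_choose_mul_eval_div_add [Field K] {c : K}
    (hc : ∀ k : ℕ, c + k ≠ 0) {m : ℕ} {P : K[X]} (hP : P.degree ≤ m) :
    ∑ j ∈ range (m + 1), (-1) ^ (m - j) * m.choose j * P.eval (j : K) / ((j : K) + c) =
      (-1) ^ m * m ! * P.eval (-c) / ∏ a ∈ range (m + 1), (c + a) := by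
  set R := P /ₘ (X - C (-c))
  have hR : R.degree < m := by
    rcases eq_or_ne P 0 with rfl | hP0
    · simp [R]
    exact (degree_divByMonic_lt _ _ hP0 (by rw [degree_X_sub_C]; exact zero_lt_one)).trans_le hP
  have hdecomp : P = C (P.eval (-c)) + (X - C (-c)) * R := by
    rw [← modByMonic_X_sub_C_eq_C_eval, modByMonic_add_div]
  have hdiv : ∀ j : ℕ,
      P.eval (j : K) / ((j : K) + c) = P.eval (-c) / ((j : K) + c) + R.eval (j : K) := by
    intro j
    have hj : (j : K) + c ≠ 0 := by simpa [add_comm] using hc j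
    conv_lhs => rw [hdecomp]
    simp only [eval_add, eval_C, eval_mul, eval_sub, eval_X, sub_neg_eq_add]
    rw [add_div, mul_div_cancel_left₀ _ hj]
  simp_rw [mul_div_assoc, hdiv, mul_add, sum_add_distrib,
    sum_range_alternating_choose_mul_eval_eq_zero hR, add_zero]
  calc _ = P.eval (-c) * ∑ j ∈ range (m + 1), (-1) ^ (m - j) * m.choose j / ((j : K) + c) := by
        rw [mul_sum]
        exact sum_congr rfl fun j _ => by ring
    _ = _ := by rw [sum_range_alternating_choose_div_add hc]; ring

end AlternatingSums

-- For `j > m` the truncated exponent `m - j` is harmless: `m.choose j = 0`.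
def jacobiCoeff (m j : ℕ) : ℤ := (-1) ^ (m - j) * m.choose j * (m + j + 1).choose (m + 1)

theorem jacobiCoeff_eq_zero_of_lt {m j : ℕ} (h : m < j) : jacobiCoeff m j = 0 := by
  simp [jacobiCoeff, Nat.choose_eq_zero_of_lt h]

section JacobiCoeff

variable {K : Type*} [Field K] [CharZero K]

omit [CharZero K] in
theorem cast_choose_mul_factorial_eq_prod_range (m j : ℕ) :
    ((m + j + 1).choose (m + 1) : K) * (m + 1)! = ∏ a ∈ range (m + 1), ((j : K) + a + 1) := by
  have h := ascFactorial_eq_factorial_mul_choose j (m + 1)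
  rw [ascFactorial_eq_prod_range, show j + (m + 1) = m + j + 1 by ring] at h
  rw [mul_comm, ← Nat.cast_mul, ← h]
  push_cast
  exact prod_congr rfl fun a _ => by ring

theorem sum_jacobiCoeff_mul_inv {i m : ℕ} (hi : i ≤ m) :
    ∑ j ∈ range (m + 1), (jacobiCoeff m j : K) * (((i : K) + j + 1) * ((i : K) + j + 2))⁻¹ =
      (-1) ^ m * m ! * (∏ a ∈ (range (m + 1)).erase i, ((a : K) - i - 1)) /
        ((m + 1)! * ∏ a ∈ range (m + 1), ((i : K) + 2 + a)) := by
  set P : K[X] := ∏ a ∈ (range (m + 1)).erase i, (X + C ((a : K) + 1))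
  have hPdeg : P.degree ≤ m := by
    refine (degree_prod_le _ _).trans ?_
    rw [sum_congr rfl fun (a : ℕ) _ => degree_X_add_C ((a : K) + 1), sum_const,
      card_erase_of_mem (mem_range.mpr (Nat.lt_succ_of_le hi)), nsmul_one]
    simp
  have hPeval : ∀ x : K, P.eval x = ∏ a ∈ (range (m + 1)).erase i, (x + a + 1) := fun x => by
    simp [P, eval_prod, add_assoc]
  have hc : ∀ k : ℕ, (i : K) + 2 + k ≠ 0 := fun k => by norm_cast; omega
  have hfac : ((m + 1)! : K) ≠ 0 := by exact_mod_cast (m + 1).factorial_ne_zero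
  have hterm : ∀ j ∈ range (m + 1),
      (jacobiCoeff m j : K) * (((i : K) + j + 1) * ((i : K) + j + 2))⁻¹ =
        (-1) ^ (m - j) * m.choose j * P.eval (j : K) / ((j : K) + (i + 2)) / (m + 1)! := by
    intro j _
    have hprod := cast_choose_mul_factorial_eq_prod_range (K := K) m j
    rw [← mul_prod_erase _ _ (mem_range.mpr (Nat.lt_succ_of_le hi)), ← hPeval] at hprod
    rw [eq_div_iff hfac, jacobiCoeff]
    have h1 : (i : K) + j + 1 ≠ 0 := by norm_cast
    have h2 : (i : K) + j + 2 ≠ 0 := by norm_cast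
    rw [show (j : K) + (i + 2) = i + j + 2 by ring]
    push_cast
    field_simp
    linear_combination (m.choose j : K) * hprod
  rw [sum_congr rfl hterm, ← sum_div, sum_range_alternating_choose_mul_eval_div_add hc hPdeg,
    hPeval, div_div, mul_comm _ ((m + 1)! : K)]
  congr 2
  exact prod_congr rfl fun a _ => by ring

theorem sum_jacobiCoeff_mul_inv_eq_zero_of_lt {i m : ℕ} (hi : i < m) :
    ∑ j ∈ range (m + 1), (jacobiCoeff m j : K) * (((i : K) + j + 1) * ((i : K) + j + 2))⁻¹ =
      0 := by
  have hmem : i + 1 ∈ (range (m + 1)).erase i :=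
    mem_erase.mpr ⟨by omega, mem_range.mpr (by omega)⟩
  rw [sum_jacobiCoeff_mul_inv hi.le, prod_eq_zero hmem (by push_cast; ring), mul_zero, zero_div]

omit [CharZero K] in
theorem prod_range_natCast_sub_sub_one (m : ℕ) :
    ∏ a ∈ range m, ((a : K) - m - 1) = (-1) ^ m * (m + 1)! := by
  have hreflect : ∀ a ∈ range m, ((m - 1 - a : ℕ) : K) - m - 1 = -((a + 1 : ℕ) + 1 : K) := by
    intro a ha
    rw [Nat.cast_sub (by simp at ha; omega), Nat.cast_sub (by simp at ha; omega)]
    push_cast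
    ring
  rw [← prod_range_reflect, prod_congr rfl hreflect, prod_neg, card_range,
    ← prod_range_add_one_eq_factorial (m + 1), prod_range_succ']
  push_cast
  ring

theorem jacobiCoeff_self_mul_sum_jacobiCoeff_mul_inv (m : ℕ) :
    (jacobiCoeff m m : K) *
      ∑ j ∈ range (m + 1), (jacobiCoeff m j : K) * (((m : K) + j + 1) * ((m : K) + j + 2))⁻¹ =
      (2 * ((m : K) + 1))⁻¹ := by
  have hchoose : ((2 * m + 1).choose (m + 1) : K) * (m + 1)! * m ! = (2 * m + 1)! := by
    have h := Nat.choose_mul_factorial_mul_factorial (show m + 1 ≤ 2 * m + 1 by omega)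
    rw [show 2 * m + 1 - (m + 1) = m by omega] at h
    exact_mod_cast h
  have hasc : ((m + 1)! : K) * ∏ a ∈ range (m + 1), ((m : K) + 2 + a) =
      (2 * m + 2) * (2 * m + 1)! := by
    have h := factorial_mul_ascFactorial (m + 1) (m + 1)
    rw [ascFactorial_eq_prod_range, show m + 1 + (m + 1) = 2 * m + 1 + 1 by ring,
      Nat.factorial_succ (2 * m + 1)] at h
    have h' : (((m + 1)! * ∏ i ∈ range (m + 1), (m + 1 + 1 + i) : ℕ) : K) =
        (((2 * m + 1 + 1) * (2 * m + 1)! : ℕ) : K) := congrArg _ h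
    push_cast at h'
    rw [prod_congr rfl fun (a : ℕ) _ => show (m : K) + 2 + a = m + 1 + 1 + a by ring]
    linear_combination h'
  have herase : (range (m + 1)).erase m = range m := by
    rw [range_add_one, erase_insert notMem_range_self]
  rw [sum_jacobiCoeff_mul_inv le_rfl, herase, prod_range_natCast_sub_sub_one, jacobiCoeff,
    Nat.sub_self, Nat.choose_self, show m + m + 1 = 2 * m + 1 by ring]
  have hsign : ((-1 : K) ^ m) ^ 2 = 1 := by rw [← pow_mul, mul_comm, pow_mul]; simp
  have hfac : ((2 * m + 1)! : K) ≠ 0 := by exact_mod_cast (2 * m + 1).factorial_ne_zero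
  have hm : (m : K) + 1 ≠ 0 := by norm_cast
  rw [hasc]
  push_cast
  field_simp
  linear_combination hchoose + ((2 * m + 1).choose (m + 1) * m ! * (m + 1)! : K) * hsign

end JacobiCoeff

def jacobiMatrix (R : Type*) [Ring R] (n : ℕ) : Matrix (Fin n) (Fin n) R :=
  of fun m j => (jacobiCoeff m j : R)

theorem jacobiMatrix_blockTriangular (R : Type*) [Ring R] (n : ℕ) :
    (jacobiMatrix R n).BlockTriangular OrderDual.toDual := fun m j (h : m < j) => by
  simp [jacobiMatrix, jacobiCoeff_eq_zero_of_lt h]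

theorem qmat_apply {n : ℕ} (i j : Fin n) :
    qmat n i j = (((i : ℝ) + j + 1) * ((i : ℝ) + j + 2))⁻¹ := by
  rw [qmat, of_apply, show (i : ℕ) + 1 + (j + 1) - 1 = i + j + 1 by omega]
  push_cast
  ring_nf

theorem qmat_transpose (n : ℕ) : (qmat n)ᵀ = qmat n := by
  ext i j
  rw [transpose_apply, qmat_apply, qmat_apply, add_comm (j : ℝ)]

theorem qmat_mul_jacobiMatrix_transpose_apply {n : ℕ} (i m : Fin n) :
    (qmat n * (jacobiMatrix ℝ n)ᵀ) i m =
      ∑ j ∈ range (m + 1), (jacobiCoeff m j : ℝ) * (((i : ℝ) + j + 1) * ((i : ℝ) + j + 2))⁻¹ := by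
  simp_rw [mul_apply, transpose_apply, qmat_apply, jacobiMatrix, of_apply]
  rw [Fin.sum_univ_eq_sum_range
      (fun j => (((i : ℝ) + j + 1) * ((i : ℝ) + j + 2))⁻¹ * (jacobiCoeff m j : ℝ)),
    ← sum_subset (range_subset_range.mpr m.isLt)]
  · exact sum_congr rfl fun j _ => mul_comm _ _
  · intro j _ hj
    rw [jacobiCoeff_eq_zero_of_lt (by simpa using hj), Int.cast_zero, mul_zero]

theorem jacobiMatrix_mul_qmat_mul_transpose (n : ℕ) :
    jacobiMatrix ℝ n * qmat n * (jacobiMatrix ℝ n)ᵀ =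
      diagonal fun m : Fin n => (2 * ((m : ℝ) + 1))⁻¹ := by
  set J := jacobiMatrix ℝ n
  have hJ : J.BlockTriangular OrderDual.toDual := jacobiMatrix_blockTriangular ℝ n
  have hB : (qmat n * Jᵀ).BlockTriangular OrderDual.toDual := fun i m (h : i < m) => by
    rw [qmat_mul_jacobiMatrix_transpose_apply]
    exact sum_jacobiCoeff_mul_inv_eq_zero_of_lt h
  have hA : (J * qmat n * Jᵀ).BlockTriangular OrderDual.toDual := by
    rw [Matrix.mul_assoc]
    exact hJ.mul hB
  have hsymm : (J * qmat n * Jᵀ)ᵀ = J * qmat n * Jᵀ := by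
    rw [transpose_mul, transpose_mul, transpose_transpose, qmat_transpose, Matrix.mul_assoc]
  ext l m
  rcases lt_trichotomy l m with h | rfl | h
  · rw [diagonal_apply_ne _ h.ne, hA (show OrderDual.toDual m < OrderDual.toDual l from h)]
  · rw [diagonal_apply_eq, Matrix.mul_assoc, mul_apply, sum_eq_single l]
    · rw [qmat_mul_jacobiMatrix_transpose_apply]
      exact jacobiCoeff_self_mul_sum_jacobiCoeff_mul_inv (K := ℝ) l
    · intro k _ hk
      rcases hk.lt_or_gt with hk | hk
      · rw [hB (show OrderDual.toDual l < OrderDual.toDual k from hk), mul_zero]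
      · rw [hJ (show OrderDual.toDual k < OrderDual.toDual l from hk), zero_mul]
    · simp
  · rw [← hsymm, transpose_apply, hA (show OrderDual.toDual l < OrderDual.toDual m from h),
      diagonal_apply_ne _ h.ne']

theorem jacobiMatrix_transpose_mul_diagonal_mul_jacobiMatrix_mul_qmat (n : ℕ) :
    (jacobiMatrix ℝ n)ᵀ * diagonal (fun m : Fin n => 2 * ((m : ℝ) + 1)) * jacobiMatrix ℝ n *
      qmat n = 1 := by
  set J := jacobiMatrix ℝ n
  set D := diagonal fun m : Fin n => 2 * ((m : ℝ) + 1)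
  have hD : D * diagonal (fun m : Fin n => (2 * ((m : ℝ) + 1))⁻¹) = 1 := by
    rw [diagonal_mul_diagonal, ← diagonal_one]
    congr 1 with m
    exact mul_inv_cancel₀ (by positivity)
  have h : (D * J * qmat n) * Jᵀ = 1 := by
    rw [Matrix.mul_assoc D, Matrix.mul_assoc D, jacobiMatrix_mul_qmat_mul_transpose, hD]
  simpa only [Matrix.mul_assoc] using mul_eq_one_comm.mp h

theorem qmat_inv_entries_even_integers_general (N : ℕ) :
    IsUnit (qmat (2 * N)).det ∧
    ∀ i j : Fin (2 * N), ∃ m : ℤ, (qmat (2 * N))⁻¹ i j = 2 * (m : ℝ) := by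
  have hinv := jacobiMatrix_transpose_mul_diagonal_mul_jacobiMatrix_mul_qmat (2 * N)
  refine ⟨isUnit_det_of_left_inverse hinv, fun i j =>
    ⟨∑ k : Fin (2 * N), jacobiCoeff k i * (k + 1) * jacobiCoeff k j, ?_⟩⟩
  rw [inv_eq_left_inv hinv, mul_apply]
  push_cast
  rw [mul_sum]
  refine sum_congr rfl fun k _ => ?_
  rw [mul_diagonal]
  simp only [transpose_apply, jacobiMatrix, of_apply]
  ring

/-- The matrix `𝔮` of size `2N × 2N` is invertible, and every entry of
`𝔔 = 𝔮⁻¹` is an even integer. -/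
theorem qmat_inv_entries_even_integers (N : ℕ) (hN : 0 < N) :
    IsUnit (qmat (2 * N)).det ∧
    ∀ i j : Fin (2 * N), ∃ m : ℤ, (qmat (2 * N))⁻¹ i j = 2 * (m : ℝ) :=
  qmat_inv_entries_even_integers_general N
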